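/- Let φ : [0,2R] → ℝ be C² with φ'' ≥ 0 on (R,2R), φ ≡ 0 on [R₂,2R] for some R < R₂ < 2R, and φ' ≤ 0 on (R,2R). Then −R·φ'(R)/√(1+(φ'(R))²) ≤ ∫_R^{2R} r·|W(r)| dr ≤ −R·φ'(R)/√(1+(φ'(R))²) − 2∫_R^{2R} φ'/√(1+(φ')²) dr, where |W(r)| = √((φ''/(1+(φ')²)^{3/2})² + (φ'/(r√(1+(φ')²)))²). -/

import Mathlib

/-! Write `a = φ''/(1+φ'²)^{3/2} ≥ 0` and `b = φ'/(r√(1+φ'²)) ≤ 0` for the principal curvatures,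
so `|W| = √(a² + b²)` lies between `a + b` and `a - b`. With `tan θ = φ'` we have `r b = sin θ` and
`r (a + b) = (r sin θ)'`; since `θ` vanishes near `2R`, integrating gives
`∫_R^{2R} r (a + b) = -R sin θ(R)`, and both bounds follow from `r (a - b) = r (a + b) - 2 sin θ`. -/

open MeasureTheory intervalIntegral Set

lemma add_le_sqrt_sq_add_sq {a b : ℝ} (h : a * b ≤ 0) : a + b ≤ √(a ^ 2 + b ^ 2) :=
  (le_abs_self _).trans (Real.abs_le_sqrt (by nlinarith))

lemma sqrt_sq_add_sq_le_abs_add_abs (a b : ℝ) : √(a ^ 2 + b ^ 2) ≤ |a| + |b| :=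
  Real.sqrt_le_iff.2 ⟨by positivity, by
    nlinarith [sq_abs a, sq_abs b, mul_nonneg (abs_nonneg a) (abs_nonneg b)]⟩

lemma hasDerivAt_div_sqrt_one_add_sq (t : ℝ) :
    HasDerivAt (fun s : ℝ => s / √(1 + s ^ 2)) (1 / (1 + t ^ 2) ^ ((3 : ℝ) / 2)) t := by
  have hu : 0 < 1 + t ^ 2 := by positivity
  have hsqrt : HasDerivAt (fun s : ℝ => √(1 + s ^ 2)) (t / √(1 + t ^ 2)) t := by
    refine (((hasDerivAt_pow 2 t).const_add 1).sqrt hu.ne').congr_deriv ?_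
    field_simp
    norm_num
  refine ((hasDerivAt_id' t).div hsqrt (Real.sqrt_pos.2 hu).ne').congr_deriv ?_
  rw [show (3 : ℝ) / 2 = 1 + 1 / 2 by norm_num, Real.rpow_add hu, Real.rpow_one,
    ← Real.sqrt_eq_rpow]
  field_simp
  rw [Real.sq_sqrt hu.le]
  ring

lemma ContDiffOn.hasDerivAt_deriv {f : ℝ → ℝ} {s : Set ℝ} (hf : ContDiffOn ℝ 2 f s)
    (hs : IsOpen s) {x : ℝ} (hx : x ∈ s) : HasDerivAt (deriv f) (deriv (deriv f) x) x :=
  (((hf.deriv_of_isOpen hs (m := 1) (by norm_num)).differentiableOn one_ne_zero x hx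
    ).differentiableAt (hs.mem_nhds hx)).hasDerivAt

lemma ContDiffOn.continuousOn_deriv_deriv {f : ℝ → ℝ} {s : Set ℝ} (hf : ContDiffOn ℝ 2 f s)
    (hs : IsOpen s) : ContinuousOn (deriv (deriv f)) s :=
  (hf.deriv_of_isOpen hs (m := 1) (by norm_num)).continuousOn_deriv_of_isOpen hs le_rfl

lemma deriv_eqOn_zero {f : ℝ → ℝ} {s : Set ℝ} (hs : IsOpen s) (hf : EqOn f 0 s) :
    EqOn (deriv f) 0 s := fun x hx => by
  rw [hf.deriv hs hx]
  exact deriv_const x 0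

section FlatTail

variable {f : ℝ → ℝ} {a b c : ℝ}

lemma intervalIntegrable_of_eqOn_zero_Ioo (hf : IntervalIntegrable f volume a c)
    (hcb : c ≤ b) (h0 : EqOn f 0 (Ioo c b)) : IntervalIntegrable f volume a b :=
  hf.trans ((intervalIntegrable_congr_uIoo (uIoo_of_le hcb ▸ h0)).2 intervalIntegrable_const)

lemma integral_eq_of_eqOn_zero_Ioo (hf : IntervalIntegrable f volume a c)
    (hcb : c ≤ b) (h0 : EqOn f 0 (Ioo c b)) : ∫ x in a..b, f x = ∫ x in a..c, f x := by
  rw [← integral_add_adjacent_intervals hf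
    ((intervalIntegrable_congr_uIoo (uIoo_of_le hcb ▸ h0)).2 intervalIntegrable_const),
    integral_congr_Ioo_of_le hcb h0]
  simp

lemma ContinuousOn.intervalIntegrable_of_eqOn_zero_Ioo (hf : ContinuousOn f (Ico a b))
    (hac : a ≤ c) (hcb : c < b) (h0 : EqOn f 0 (Ioo c b)) : IntervalIntegrable f volume a b :=
  _root_.intervalIntegrable_of_eqOn_zero_Ioo
    ((hf.mono (Icc_subset_Ico_right hcb)).intervalIntegrable_of_Icc hac) hcb.le h0

/-- Nothing is assumed of `g` at `b`: below, `b = 2R` ends the domain of `φ`, and `deriv φ` is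
junk there. -/
lemma integral_eq_neg_of_hasDerivAt_of_eqOn_zero {g g' : ℝ → ℝ} (hac : a ≤ c) (hcb : c < b)
    (hg : ∀ x ∈ Ico a b, HasDerivAt g (g' x) x) (hg' : ContinuousOn g' (Ico a b))
    (h0 : EqOn g 0 (Ioo c b)) : ∫ x in a..b, g' x = -g a := by
  obtain ⟨d, hcd, hdb⟩ := exists_between hcb
  have hg'0 : EqOn g' 0 (Ioo c b) := fun x hx =>
    (hg x ⟨hac.trans hx.1.le, hx.2⟩).deriv.symm.trans (deriv_eqOn_zero isOpen_Ioo h0 hx)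
  have hint : IntervalIntegrable g' volume a d :=
    (hg'.mono (Icc_subset_Ico_right hdb)).intervalIntegrable_of_Icc (hac.trans hcd.le)
  rw [integral_eq_of_eqOn_zero_Ioo hint hdb.le (hg'0.mono (Ioo_subset_Ioo_left hcd.le)),
    integral_eq_sub_of_hasDerivAt
      (fun x hx => hg x (Icc_subset_Ico_right hdb (uIcc_of_le (hac.trans hcd.le) ▸ hx))) hint,
    h0 ⟨hcd, hdb⟩, Pi.zero_apply, zero_sub]

end FlatTail

/-- The principal curvatures of the radial graph `x ↦ φ ‖x‖` at radius `r`;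
`weingartenNorm φ r` is `|W(r)|`. -/
noncomputable def meridianCurvature (φ : ℝ → ℝ) (r : ℝ) : ℝ :=
  deriv (deriv φ) r / (1 + deriv φ r ^ 2) ^ ((3 : ℝ) / 2)

noncomputable def parallelCurvature (φ : ℝ → ℝ) (r : ℝ) : ℝ :=
  deriv φ r / (r * √(1 + deriv φ r ^ 2))

noncomputable def weingartenNorm (φ : ℝ → ℝ) (r : ℝ) : ℝ :=
  √(meridianCurvature φ r ^ 2 + parallelCurvature φ r ^ 2)

section Curvatures

variable {φ : ℝ → ℝ} {r : ℝ} {s : Set ℝ}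

lemma meridianCurvature_nonneg (h : 0 ≤ deriv (deriv φ) r) : 0 ≤ meridianCurvature φ r :=
  div_nonneg h (by positivity)

lemma parallelCurvature_nonpos (hr : 0 ≤ r) (h : deriv φ r ≤ 0) : parallelCurvature φ r ≤ 0 :=
  div_nonpos_of_nonpos_of_nonneg h (by positivity)

lemma mul_parallelCurvature (hr : r ≠ 0) :
    r * parallelCurvature φ r = deriv φ r / √(1 + deriv φ r ^ 2) := by
  unfold parallelCurvature
  field_simp

lemma meridianCurvature_eqOn_zero (hs : IsOpen s) (h : EqOn φ 0 s) :
    EqOn (meridianCurvature φ) 0 s := fun r hr => by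
  simp [meridianCurvature, deriv_eqOn_zero hs (deriv_eqOn_zero hs h) hr]

lemma parallelCurvature_eqOn_zero (hs : IsOpen s) (h : EqOn φ 0 s) :
    EqOn (parallelCurvature φ) 0 s := fun r hr => by
  simp [parallelCurvature, deriv_eqOn_zero hs h hr]

lemma continuousOn_meridianCurvature (h1 : ContinuousOn (deriv φ) s)
    (h2 : ContinuousOn (deriv (deriv φ)) s) : ContinuousOn (meridianCurvature φ) s :=
  h2.div ((continuousOn_const.add (h1.pow 2)).rpow_const fun _ _ => Or.inr (by norm_num))
    fun _ _ => by positivity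

lemma continuousOn_parallelCurvature (h1 : ContinuousOn (deriv φ) s) (hs : ∀ r ∈ s, r ≠ 0) :
    ContinuousOn (parallelCurvature φ) s :=
  h1.div (continuousOn_id.mul (continuousOn_const.add (h1.pow 2)).sqrt)
    fun r hr => mul_ne_zero (hs r hr) (by positivity)

lemma continuousOn_deriv_div_sqrt (h1 : ContinuousOn (deriv φ) s) :
    ContinuousOn (fun r => deriv φ r / √(1 + deriv φ r ^ 2)) s :=
  h1.div (continuousOn_const.add (h1.pow 2)).sqrt fun _ _ => by positivity

/-- The function differentiated is `r sin θ`, where `tan θ = φ'`. -/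
lemma hasDerivAt_mul_sin_slope (hr : r ≠ 0) (hφ : HasDerivAt (deriv φ) (deriv (deriv φ) r) r) :
    HasDerivAt (fun s => s * (deriv φ s / √(1 + deriv φ s ^ 2)))
      (r * (meridianCurvature φ r + parallelCurvature φ r)) r := by
  refine ((hasDerivAt_id r).mul ((hasDerivAt_div_sqrt_one_add_sq _).comp r hφ)).congr_deriv ?_
  rw [mul_add, mul_parallelCurvature hr, meridianCurvature]
  simp only [id, Function.comp]
  ring

lemma mul_weingartenNorm_bounds (hr : 0 < r) (h2 : 0 ≤ deriv (deriv φ) r) (h1 : deriv φ r ≤ 0) :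
    r * (meridianCurvature φ r + parallelCurvature φ r) ≤ r * weingartenNorm φ r ∧
      r * weingartenNorm φ r ≤ r * (meridianCurvature φ r + parallelCurvature φ r)
        - 2 * (deriv φ r / √(1 + deriv φ r ^ 2)) := by
  have ha := meridianCurvature_nonneg h2
  have hb := parallelCurvature_nonpos hr.le h1
  have hupper := sqrt_sq_add_sq_le_abs_add_abs (meridianCurvature φ r) (parallelCurvature φ r)
  rw [abs_of_nonneg ha, abs_of_nonpos hb] at hupper
  rw [← mul_parallelCurvature hr.ne', weingartenNorm]
  constructor
  · exact mul_le_mul_of_nonneg_left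
      (add_le_sqrt_sq_add_sq (mul_nonpos_of_nonneg_of_nonpos ha hb)) hr.le
  · nlinarith [mul_le_mul_of_nonneg_left hupper hr.le]

end Curvatures

/-- two-sided bound for `∫_R^{2R} r·|W(r)| dr` on the convex annular part. -/
theorem weingarten_integral_annulus_bounds
    (R R₂ : ℝ) (hR : 0 < R) (hR₂ : R < R₂) (hR₂' : R₂ < 2*R)
    (φ : ℝ → ℝ) (hφ : ContDiffOn ℝ 2 φ (Set.Icc 0 (2*R)))
    (hconv : ∀ r ∈ Set.Ioo R (2*R), 0 ≤ deriv (deriv φ) r)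
    (hzero : ∀ r ∈ Set.Icc R₂ (2*R), φ r = 0)
    (hφ'neg : ∀ r ∈ Set.Ioo R (2*R), deriv φ r ≤ 0) :
    -R * deriv φ R / Real.sqrt (1 + (deriv φ R)^2)
      ≤ (∫ r in R..(2*R),
          r * Real.sqrt ((deriv (deriv φ) r / (1 + (deriv φ r)^2) ^ ((3:ℝ)/2))^2
            + (deriv φ r / (r * Real.sqrt (1 + (deriv φ r)^2)))^2)) ∧
    (∫ r in R..(2*R),
        r * Real.sqrt ((deriv (deriv φ) r / (1 + (deriv φ r)^2) ^ ((3:ℝ)/2))^2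
          + (deriv φ r / (r * Real.sqrt (1 + (deriv φ r)^2)))^2))
      ≤ -R * deriv φ R / Real.sqrt (1 + (deriv φ R)^2)
        - 2 * ∫ r in R..(2*R), deriv φ r / Real.sqrt (1 + (deriv φ r)^2) := by
  have hU : ContDiffOn ℝ 2 φ (Ioo 0 (2 * R)) := hφ.mono Ioo_subset_Icc_self
  have hsub : Ico R (2 * R) ⊆ Ioo 0 (2 * R) := fun r hr => ⟨hR.trans_le hr.1, hr.2⟩
  have hφ' := (hU.continuousOn_deriv_of_isOpen isOpen_Ioo one_le_two).mono hsub
  have hφ'' := (hU.continuousOn_deriv_deriv isOpen_Ioo).mono hsub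
  have hκ₁ := continuousOn_meridianCurvature hφ' hφ''
  have hκ₂ := continuousOn_parallelCurvature hφ' fun r hr => (hR.trans_le hr.1).ne'
  have hflat : EqOn φ 0 (Ioo R₂ (2 * R)) := fun r hr => hzero r (Ioo_subset_Icc_self hr)
  have hκ₁0 := meridianCurvature_eqOn_zero isOpen_Ioo hflat
  have hκ₂0 := parallelCurvature_eqOn_zero isOpen_Ioo hflat
  have hH : ContinuousOn (fun r => r * (meridianCurvature φ r + parallelCurvature φ r))
      (Ico R (2 * R)) := continuousOn_id.mul (hκ₁.add hκ₂)
  have hHint := hH.intervalIntegrable_of_eqOn_zero_Ioo hR₂.le hR₂' fun r hr => by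
    simp [hκ₁0 hr, hκ₂0 hr]
  have hW : IntervalIntegrable (fun r => r * weingartenNorm φ r) volume R (2 * R) :=
    (continuousOn_id.mul ((hκ₁.pow 2).add (hκ₂.pow 2)).sqrt).intervalIntegrable_of_eqOn_zero_Ioo
      hR₂.le hR₂' fun r hr => by simp [hκ₁0 hr, hκ₂0 hr]
  have hψ := (continuousOn_deriv_div_sqrt hφ').intervalIntegrable_of_eqOn_zero_Ioo hR₂.le hR₂'
    fun r hr => by simp [deriv_eqOn_zero isOpen_Ioo hflat hr]
  have hFTC := integral_eq_neg_of_hasDerivAt_of_eqOn_zero hR₂.le hR₂'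
    (fun r hr => hasDerivAt_mul_sin_slope (hR.trans_le hr.1).ne'
      (hU.hasDerivAt_deriv isOpen_Ioo (hsub hr))) hH
    fun r hr => by simp [deriv_eqOn_zero isOpen_Ioo hflat hr]
  have hbounds := fun r (hr : r ∈ Ioo R (2 * R)) =>
    mul_weingartenNorm_bounds (hR.trans hr.1) (hconv r hr) (hφ'neg r hr)
  rw [neg_mul, neg_div, mul_div_assoc, ← hFTC]
  refine ⟨integral_mono_on_of_le_Ioo (by linarith) hHint hW fun r hr => (hbounds r hr).1, ?_⟩
  rw [← intervalIntegral.integral_const_mul, ← integral_sub hHint (hψ.const_mul 2)]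
  exact integral_mono_on_of_le_Ioo (by linarith) hW (hHint.sub (hψ.const_mul 2))
    fun r hr => (hbounds r hr).2
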